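/- Let (X, Γ, Φ) be a minimal equicontinuous Cantor action, x ∈ X a basepoint, and { U_ℓ : ℓ ≥ 0 } an adapted neighborhood basis at x with stabilizer subgroups Γ_ℓ = { g ∈ Γ : Φ(g)(U_ℓ) = U_ℓ }. Let C_ℓ = ⋂_{g ∈ Γ} g Γ_ℓ g⁻¹ be the normal core of Γ_ℓ in Γ, let D_∞ be the inverse limit of the finite groups Γ_ℓ/C_ℓ with bonding maps induced by the inclusions Γ_{ℓ+1} ⊂ Γ_ℓ, and let k*_ℓ be the cardinality of the image of the projection D_∞ → Γ_ℓ/C_ℓ. Then: (1) Π[G(Φ)] = LCM{ [Γ : C_ℓ] : ℓ ≥ 0 }; (2) Π[G(Φ) : D(Φ,x)] = LCM{ [Γ : Γ_ℓ] : ℓ ≥ 0 }; (3) Π[D(Φ,x)] = LCM{ k*_ℓ : ℓ ≥ 0 }. -/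

import Mathlib

noncomputable section

open Set Topology

/-! ### The group of homeomorphisms -/

namespace Homeomorph

variable {X : Type*} [TopologicalSpace X]

instance instGroup' : Group (X ≃ₜ X) where
  mul f g := g.trans f
  one := Homeomorph.refl X
  inv := Homeomorph.symm
  mul_assoc f g h := rfl
  one_mul f := rfl
  mul_one f := rfl
  inv_mul_cancel f := Homeomorph.ext fun x => f.symm_apply_apply x

@[simp] theorem mul_apply' (f g : X ≃ₜ X) (x : X) : (f * g) x = f (g x) := rfl
@[simp] theorem one_apply' (x : X) : (1 : X ≃ₜ X) x = x := rfl
@[simp] theorem inv_eq_symm (f : X ≃ₜ X) : f⁻¹ = f.symm := rfl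

/-- The uniform topology (topology of uniform convergence, equivalently for a compact
metric space the compact-open topology) on the group of homeomorphisms of a compact
metric space, as the metric topology of the sup-metric. -/
instance instMetricSpaceHomeomorph {Y : Type*} [MetricSpace Y] [CompactSpace Y] :
    MetricSpace (Y ≃ₜ Y) :=
  MetricSpace.induced (fun h => (⟨h, h.continuous⟩ : C(Y, Y)))
    (fun f g hfg => Homeomorph.ext fun x => congrFun (congrArg ContinuousMap.toFun hfg) x)
    inferInstance

end Homeomorph

namespace Homeomorph

variable {Y : Type*} [MetricSpace Y] [CompactSpace Y]

theorem dist_eq_contMap (f g : Y ≃ₜ Y) :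
    dist f g = dist (⟨f, f.continuous⟩ : C(Y, Y)) (⟨g, g.continuous⟩ : C(Y, Y)) := rfl

theorem dist_apply_le (f g : Y ≃ₜ Y) (x : Y) : dist (f x) (g x) ≤ dist f g :=
  ContinuousMap.dist_apply_le_dist (f := (⟨f, f.continuous⟩ : C(Y, Y)))
    (g := (⟨g, g.continuous⟩ : C(Y, Y))) x

theorem dist_lt_iff' (f g : Y ≃ₜ Y) {C : ℝ} (hC : 0 < C) :
    dist f g < C ↔ ∀ x : Y, dist (f x) (g x) < C := by
  rw [dist_eq_contMap, ContinuousMap.dist_lt_iff hC]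
  rfl

instance : IsTopologicalGroup (Y ≃ₜ Y) where
  continuous_mul := by
    rw [Metric.continuous_iff]
    rintro ⟨f₀, g₀⟩ ε hε
    obtain ⟨δ₁, hδ₁, H₁⟩ := Metric.uniformContinuous_iff.mp
      (CompactSpace.uniformContinuous_of_continuous f₀.continuous) (ε / 2) (by positivity)
    refine ⟨min δ₁ (ε / 2), by positivity, ?_⟩
    rintro ⟨f, g⟩ hd
    have hdf : dist f f₀ < ε / 2 := by
      have h' : dist f f₀ ≤ dist ((f, g)) ((f₀, g₀)) := by
        rw [Prod.dist_eq]; exact le_max_left _ _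
      exact (h'.trans_lt hd).trans_le (min_le_right _ _)
    have hdg : dist g g₀ < δ₁ := by
      have h' : dist g g₀ ≤ dist ((f, g)) ((f₀, g₀)) := by
        rw [Prod.dist_eq]; exact le_max_right _ _
      exact (h'.trans_lt hd).trans_le (min_le_left _ _)
    rw [dist_lt_iff' _ _ hε]
    intro x
    have h1 : dist (f (g x)) (f₀ (g x)) < ε / 2 :=
      lt_of_le_of_lt (dist_apply_le f f₀ (g x)) hdf
    have h2 : dist (f₀ (g x)) (f₀ (g₀ x)) < ε / 2 :=
      H₁ (lt_of_le_of_lt (dist_apply_le g g₀ x) hdg)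
    calc dist ((f * g) x) ((f₀ * g₀) x) ≤ dist (f (g x)) (f₀ (g x)) + dist (f₀ (g x)) (f₀ (g₀ x)) :=
          dist_triangle _ _ _
      _ < ε / 2 + ε / 2 := by exact add_lt_add h1 h2
      _ = ε := by ring
  continuous_inv := by
    rw [Metric.continuous_iff]
    intro f₀ ε hε
    obtain ⟨δ, hδ, H⟩ := Metric.uniformContinuous_iff.mp
      (CompactSpace.uniformContinuous_of_continuous f₀.symm.continuous) ε hε
    refine ⟨δ, hδ, ?_⟩
    intro g hdg
    rw [dist_lt_iff' _ _ hε]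
    intro y
    have key : dist (g (g.symm y)) (f₀ (g.symm y)) < δ :=
      lt_of_le_of_lt (dist_apply_le g f₀ (g.symm y)) hdg
    have h2 := H key
    have h3 : dist (f₀.symm (g (g.symm y))) (f₀.symm (f₀ (g.symm y))) < ε := h2
    rw [Homeomorph.apply_symm_apply, Homeomorph.symm_apply_apply] at h3
    rw [dist_comm] at h3
    simpa using h3
end Homeomorph

/-! ### Steinitz (supernatural) numbers -/

/-- A Steinitz number: a formal product of primes with exponents in `ℕ∞`. -/
def SteinitzNum : Type := Nat.Primes → ℕ∞

namespace SteinitzNum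

/-- The Steinitz number associated to a natural number. -/
def ofNat (n : ℕ) : SteinitzNum := fun p => (n.factorization (p : ℕ) : ℕ∞)

/-- Multiplication of Steinitz numbers adds the exponents at each prime. -/
instance : Mul SteinitzNum := ⟨fun a b p => a p + b p⟩

/-- The least common multiple of a collection of positive integers, as a Steinitz number:
its exponent at `p` is the supremum of the `p`-adic valuations of the elements. -/
def lcmSet (S : Set ℕ) : SteinitzNum := fun p => ⨆ n ∈ S, (n.factorization (p : ℕ) : ℕ∞)

/-- Two Steinitz numbers are asymptotically equivalent if they agree after multiplication
by positive integers. -/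
def AsympEquiv (a b : SteinitzNum) : Prop :=
  ∃ n₀ m₀ : ℕ, 0 < n₀ ∧ 0 < m₀ ∧ ofNat n₀ * a = ofNat m₀ * b

/-- The prime spectrum of a Steinitz number: primes with nonzero exponent. -/
def primeSpectrum (a : SteinitzNum) : Set Nat.Primes := { p | a p ≠ 0 }

/-- The finite prime spectrum: primes with finite nonzero exponent. -/
def finitePrimeSpectrum (a : SteinitzNum) : Set Nat.Primes := { p | a p ≠ 0 ∧ a p ≠ ⊤ }

/-- The infinite prime spectrum: primes with infinite exponent. -/
def infinitePrimeSpectrum (a : SteinitzNum) : Set Nat.Primes := { p | a p = ⊤ }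

end SteinitzNum

/-! ### Steinitz orders for topological groups -/

/-- The Steinitz order of a topological group: the LCM of the orders of the finite
quotients `G/N` over open normal subgroups `N ⊆ G`. -/
def steinitzOrder (G : Type*) [Group G] [TopologicalSpace G] : SteinitzNum :=
  SteinitzNum.lcmSet
    { n | ∃ N : Subgroup G, N.Normal ∧ IsOpen (N : Set G) ∧ n = Nat.card (G ⧸ N) }

/-- The Steinitz order of a subgroup `D` of a topological group `G`: the LCM of the
cardinalities `|D/(N ∩ D)|` over open normal subgroups `N ⊆ G`. -/
def steinitzOrderOfSubgroup {G : Type*} [Group G] [TopologicalSpace G] (D : Subgroup G) :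
    SteinitzNum :=
  SteinitzNum.lcmSet
    { n | ∃ N : Subgroup G, N.Normal ∧ IsOpen (N : Set G) ∧
        n = Nat.card (↥D ⧸ (N.subgroupOf D)) }

/-- The relative Steinitz order of a subgroup `D` of a topological group `G`: the LCM of the
cardinalities `|G/(N · D)|` over open normal subgroups `N ⊆ G`. -/
def steinitzRelativeOrder {G : Type*} [Group G] [TopologicalSpace G] (D : Subgroup G) :
    SteinitzNum :=
  SteinitzNum.lcmSet
    { n | ∃ N : Subgroup G, N.Normal ∧ IsOpen (N : Set G) ∧ n = Nat.card (G ⧸ (N ⊔ D)) }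

/-- A profinite (compact Hausdorff totally disconnected) topological group is topologically
Noetherian if every increasing chain of closed subgroups has a maximal element. -/
def TopologicallyNoetherian (G : Type*) [Group G] [TopologicalSpace G] : Prop :=
  ∀ c : ℕ → Subgroup G, (∀ i, IsClosed (c i : Set G)) → Monotone c → ∃ i₀, ∀ i, c i ≤ c i₀

/-! ### Cantor actions -/

section CantorActions

variable {X : Type*} [MetricSpace X] {Γ : Type*} [Group Γ]

/-- An action is minimal if every orbit is dense. -/
def IsMinimalAction (Φ : Γ →* (X ≃ₜ X)) : Prop :=
  ∀ x : X, Dense (Set.range fun g : Γ => Φ g x)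

/-- An action is equicontinuous if it satisfies the uniform `ε`-`δ` condition with respect
to the metric. -/
def IsEquicontinuousAction (Φ : Γ →* (X ≃ₜ X)) : Prop :=
  ∀ ε : ℝ, 0 < ε → ∃ δ : ℝ, 0 < δ ∧
    ∀ x y : X, dist x y < δ → ∀ g : Γ, dist (Φ g x) (Φ g y) < ε

variable [CompactSpace X]

/-- `G(Φ)`: the closure of the image of `Γ` in `Homeo(X)`, in the uniform topology. -/
def profiniteClosure (Φ : Γ →* (X ≃ₜ X)) : Subgroup (X ≃ₜ X) :=
  Φ.range.topologicalClosure

/-- The discriminant group: the isotropy subgroup of `G(Φ)` at `x`. -/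
def discriminant (Φ : Γ →* (X ≃ₜ X)) (x : X) : Subgroup (profiniteClosure Φ) where
  carrier := { h | (h : X ≃ₜ X) x = x }
  one_mem' := rfl
  mul_mem' := by
    intro a b ha hb
    simp only [Set.mem_setOf_eq] at *
    show ((a : X ≃ₜ X) * (b : X ≃ₜ X)) x = x
    rw [Homeomorph.mul_apply', hb, ha]
  inv_mem' := by
    intro a ha
    simp only [Set.mem_setOf_eq] at *
    show ((a : X ≃ₜ X)⁻¹) x = x
    rw [Homeomorph.inv_eq_symm]
    conv_lhs => rw [← ha]
    exact Homeomorph.symm_apply_apply _ _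

/-- The Steinitz order `Π[G(Φ)]` of a Cantor action. -/
def steinitzOrderAction (Φ : Γ →* (X ≃ₜ X)) : SteinitzNum :=
  steinitzOrder ↥(profiniteClosure Φ)

/-- The Steinitz order `Π[D(Φ,x)]` of the discriminant of a Cantor action. -/
def steinitzOrderDisc (Φ : Γ →* (X ≃ₜ X)) (x : X) : SteinitzNum :=
  steinitzOrderOfSubgroup (discriminant Φ x)

/-- The relative Steinitz order `Π[G(Φ) : D(Φ,x)]` of a Cantor action. -/
def steinitzOrderRel (Φ : Γ →* (X ≃ₜ X)) (x : X) : SteinitzNum :=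
  steinitzRelativeOrder (discriminant Φ x)

end CantorActions

/-! ### Adapted sets, holonomy and return equivalence -/

section Adapted

variable {X : Type*} [MetricSpace X] {Γ : Type*} [Group Γ]

/-- A nonempty clopen subset `U ⊆ X` is adapted to the action `Φ` if every group element
either fixes `U` or moves it entirely off of itself. -/
def IsAdaptedSet (Φ : Γ →* (X ≃ₜ X)) (U : Set X) : Prop :=
  U.Nonempty ∧ IsClopen U ∧ ∀ g : Γ, ((Φ g) '' U ∩ U).Nonempty → (Φ g) '' U = U

/-- The stabilizer subgroup `Γ_U` of an adapted set. -/
def adaptedStabilizer (Φ : Γ →* (X ≃ₜ X)) (U : Set X) : Subgroup Γ where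
  carrier := { g | (Φ g) '' U = U }
  one_mem' := by simp [show ⇑(1 : X ≃ₜ X) = id from rfl]
  mul_mem' := by
    intro a b ha hb
    simp only [Set.mem_setOf_eq] at *
    rw [map_mul]
    show ((Φ a) * (Φ b)) '' U = U
    have : (((Φ a) * (Φ b) : X ≃ₜ X) : X → X) = (Φ a) ∘ (Φ b) := rfl
    rw [this, Set.image_comp, hb, ha]
  inv_mem' := by
    intro a ha
    simp only [Set.mem_setOf_eq] at *
    rw [map_inv, Homeomorph.inv_eq_symm]
    conv_lhs => rw [← ha]
    rw [← Set.image_comp]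
    simp

/-- The homeomorphism of an invariant set induced by a homeomorphism of `X`. -/
def restrictHomeo (h : X ≃ₜ X) {U : Set X} (hU : h '' U = U) : U ≃ₜ U :=
  (h.image U).trans (Homeomorph.setCongr hU)

@[simp] theorem restrictHomeo_coe (h : X ≃ₜ X) {U : Set X} (hU : h '' U = U) (x : U) :
    (restrictHomeo h hU x : X) = h x := rfl

/-- The holonomy homomorphism of an adapted set: restriction of the stabilizer to `U`. -/
def holonomyHom (Φ : Γ →* (X ≃ₜ X)) (U : Set X) :
    adaptedStabilizer Φ U →* (↥U ≃ₜ ↥U) where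
  toFun g := restrictHomeo (Φ (g : Γ)) g.2
  map_one' := by
    ext x
    show ((restrictHomeo (Φ ((1 : adaptedStabilizer Φ U) : Γ)) _ x : X) = _)
    simp
  map_mul' := by
    intro a b
    ext x
    show ((restrictHomeo (Φ ((a * b : adaptedStabilizer Φ U) : Γ)) _ x : X) = _)
    simp only [restrictHomeo_coe, Subgroup.coe_mul, map_mul]
    rfl

/-- The holonomy group `H_U` of an adapted set: the image of the stabilizer in `Homeo(U)`. -/
def holonomyGroup (Φ : Γ →* (X ≃ₜ X)) (U : Set X) : Subgroup (↥U ≃ₜ ↥U) :=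
  (holonomyHom Φ U).range

end Adapted

/-- Two Cantor actions are return equivalent if they admit adapted sets whose holonomy
actions are isomorphic, via a homeomorphism between the adapted sets together with a
compatible isomorphism of the holonomy groups. -/
def ReturnEquivalent
    {X₁ : Type*} [MetricSpace X₁] {Γ₁ : Type*} [Group Γ₁]
    {X₂ : Type*} [MetricSpace X₂] {Γ₂ : Type*} [Group Γ₂]
    (Φ₁ : Γ₁ →* (X₁ ≃ₜ X₁)) (Φ₂ : Γ₂ →* (X₂ ≃ₜ X₂)) : Prop :=
  ∃ (U₁ : Set X₁) (U₂ : Set X₂), IsAdaptedSet Φ₁ U₁ ∧ IsAdaptedSet Φ₂ U₂ ∧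
    ∃ (h : ↥U₁ ≃ₜ ↥U₂) (θ : holonomyGroup Φ₁ U₁ ≃* holonomyGroup Φ₂ U₂),
      ∀ k : holonomyGroup Φ₁ U₁,
        ((θ k : ↥U₂ ≃ₜ ↥U₂)) = h.symm.trans (((k : ↥U₁ ≃ₜ ↥U₁)).trans h)

section Regularity

variable {X : Type*} [MetricSpace X]

/-- An action of a group `H` on `X` through a homomorphism `ρ : H →* Homeo(X)` is locally
quasi-analytic if there is `ε > 0` so that for every nonempty open `U` of diameter less
than `ε`, any element acting as the identity on a nonempty open subset `V ⊆ U` with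
`ρ g (V) = V` acts as the identity on all of `U`. -/
def IsLocallyQuasiAnalytic {H : Type*} [Group H] (ρ : H →* (X ≃ₜ X)) : Prop :=
  ∃ ε : ℝ, 0 < ε ∧ ∀ U : Set X, IsOpen U → U.Nonempty → Metric.diam U < ε →
    ∀ V : Set X, V ⊆ U → IsOpen V → V.Nonempty →
      ∀ g : H, (ρ g) '' V = V → (∀ x ∈ V, ρ g x = x) → ∀ x ∈ U, ρ g x = x

variable [CompactSpace X] {Γ : Type*} [Group Γ]

/-- A Cantor action is stable if the induced action of `G(Φ)` on `X` is locally
quasi-analytic; otherwise it is wild. -/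
def IsStableAction (Φ : Γ →* (X ≃ₜ X)) : Prop :=
  IsLocallyQuasiAnalytic (profiniteClosure Φ).subtype

/-- An action is topologically free if the set of points fixed by some nontrivial group
element is meagre. -/
def IsTopologicallyFree (Φ : Γ →* (X ≃ₜ X)) : Prop :=
  IsMeagre { x : X | ∃ g : Γ, g ≠ 1 ∧ Φ g x = x }

end Regularity

/-! ### Group chains and their inverse limits -/

section GroupChains

variable {Γ : Type*} [Group Γ]

/-- The finite quotient `Γ_ℓ / C_ℓ` of an element of a group chain by its normal core. -/
def chainQuot (Γs : ℕ → Subgroup Γ) (ℓ : ℕ) : Type _ :=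
  ↥(Γs ℓ) ⧸ ((Γs ℓ).normalCore.subgroupOf (Γs ℓ))

instance (Γs : ℕ → Subgroup Γ) (ℓ : ℕ) : Group (chainQuot Γs ℓ) :=
  inferInstanceAs (Group (↥(Γs ℓ) ⧸ ((Γs ℓ).normalCore.subgroupOf (Γs ℓ))))

/-- The bonding homomorphism `Γ_{ℓ+1}/C_{ℓ+1} → Γ_ℓ/C_ℓ` induced by the inclusion
`Γ_{ℓ+1} ⊆ Γ_ℓ`. -/
def chainBond (Γs : ℕ → Subgroup Γ) (hle : ∀ ℓ, Γs (ℓ + 1) ≤ Γs ℓ) (ℓ : ℕ) :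
    chainQuot Γs (ℓ + 1) →* chainQuot Γs ℓ :=
  QuotientGroup.map _ _ (Subgroup.inclusion (hle ℓ)) (by
    intro g hg
    simp only [Subgroup.mem_comap, Subgroup.mem_subgroupOf] at hg ⊢
    exact Subgroup.normalCore_mono (hle ℓ) hg)

/-- The inverse limit `D_∞ = lim← Γ_ℓ/C_ℓ`, as the subgroup of the product consisting of
the sequences compatible with the bonding maps. -/
def chainDinf (Γs : ℕ → Subgroup Γ) (hle : ∀ ℓ, Γs (ℓ + 1) ≤ Γs ℓ) :
    Subgroup (∀ ℓ, chainQuot Γs ℓ) where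
  carrier := { z | ∀ ℓ, chainBond Γs hle ℓ (z (ℓ + 1)) = z ℓ }
  one_mem' := fun ℓ => by simp only [Pi.one_apply, map_one]
  mul_mem' := by
    intro a b ha hb ℓ
    simp only [Pi.mul_apply, map_mul, ha ℓ, hb ℓ]
  inv_mem' := by
    intro a ha ℓ
    simp only [Pi.inv_apply, map_inv, ha ℓ]

end GroupChains

/-- The stabilizer subgroups of a nested pair of adapted sets are nested. -/
theorem adaptedStabilizer_mono {X : Type*} [MetricSpace X] {Γ : Type*} [Group Γ]
    (Φ : Γ →* (X ≃ₜ X)) {U V : Set X} (hVU : V ⊆ U)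
    (hU : IsAdaptedSet Φ U) (hV : IsAdaptedSet Φ V) :
    adaptedStabilizer Φ V ≤ adaptedStabilizer Φ U := by
  intro g hg
  have hgV : (Φ g) '' V = V := hg
  have hne : ((Φ g) '' U ∩ U).Nonempty := by
    obtain ⟨v, hv⟩ := hV.1
    refine ⟨v, ?_, hVU hv⟩
    have hv' : v ∈ (Φ g) '' V := by rw [hgV]; exact hv
    exact Set.image_mono hVU hv'
  exact hU.2.2 g hne

/-!
Write `G = G(Φ)`, `S_ℓ ≤ G` for the stabilizer of `U ℓ` and `N_ℓ` for its normal core. As `U ℓ`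
is clopen, homeomorphisms uniformly close to the identity preserve it, so `S_ℓ` is open; since
`Γ` is dense in `G`, pulling back along `Γ → G` identifies `G / S_ℓ` with `Γ / Γ_ℓ` and
`G / N_ℓ` with `Γ / C_ℓ`. Equicontinuity makes the translates of `U ℓ` uniformly small, so the
open normal subgroups `N_ℓ` are cofinal among all open subgroups of `G`; this gives (1) and
reduces (2) and (3) to the `N_ℓ`.

For large `j` the elements of `C_j` move every point only slightly, so a sequence `g_j ∈ Γ_j`
that is compatible modulo the cores `C_j` converges in `G`, to an element of `D(Φ, x)` congruent
to `g_j` modulo `N_j`. Hence the image of `D_∞` in `Γ_ℓ / C_ℓ ≤ G / N_ℓ` is `D(Φ, x) N_ℓ / N_ℓ`,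
which is (3). Combined with the Mittag-Leffler property of the finite quotients `Γ / C_ℓ` this
shows `S_M ≤ N_ℓ D(Φ, x)` for large `M`, and (2) follows.
-/

namespace SteinitzNum

theorem lcmSet_apply_le_of_forall_dvd {S T : Set ℕ} (h : ∀ n ∈ S, ∃ m ∈ T, n ∣ m ∧ m ≠ 0)
    (p : Nat.Primes) : lcmSet S p ≤ lcmSet T p := by
  refine iSup₂_le fun n hn => ?_
  obtain ⟨m, hm, hnm, hm0⟩ := h n hn
  have hle := (Nat.factorization_le_iff_dvd (ne_zero_of_dvd_ne_zero hm0 hnm) hm0).mpr hnm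
  exact (Nat.cast_le.mpr (hle p)).trans
    (le_iSup₂ (f := fun n (_ : n ∈ T) => (n.factorization p : ℕ∞)) m hm)

theorem lcmSet_eq_of_forall_dvd {S T : Set ℕ} (hST : ∀ n ∈ S, ∃ m ∈ T, n ∣ m ∧ m ≠ 0)
    (hTS : ∀ m ∈ T, ∃ n ∈ S, m ∣ n ∧ n ≠ 0) : lcmSet S = lcmSet T :=
  funext fun p => (lcmSet_apply_le_of_forall_dvd hST p).antisymm
    (lcmSet_apply_le_of_forall_dvd hTS p)

theorem lcmSet_eq_of_cofinal {G : Type*} [Group G] [TopologicalSpace G]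
    (c : Subgroup G → ℕ) (hc : ∀ {K K' : Subgroup G}, K ≤ K' → c K' ∣ c K)
    {N : ℕ → Subgroup G} (hN : ∀ ℓ, (N ℓ).Normal) (hNopen : ∀ ℓ, IsOpen (N ℓ : Set G))
    (hcof : ∀ K : Subgroup G, IsOpen (K : Set G) → ∃ ℓ, N ℓ ≤ K) (hc0 : ∀ ℓ, c (N ℓ) ≠ 0) :
    lcmSet {n | ∃ K : Subgroup G, K.Normal ∧ IsOpen (K : Set G) ∧ n = c K} =
      lcmSet (Set.range fun ℓ => c (N ℓ)) := by
  refine lcmSet_eq_of_forall_dvd ?_ ?_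
  · rintro _ ⟨K, -, hK, rfl⟩
    obtain ⟨ℓ, hℓ⟩ := hcof K hK
    exact ⟨_, ⟨ℓ, rfl⟩, hc hℓ, hc0 ℓ⟩
  · rintro _ ⟨ℓ, rfl⟩
    exact ⟨_, ⟨N ℓ, hN ℓ, hNopen ℓ, rfl⟩, dvd_rfl, hc0 ℓ⟩

end SteinitzNum

/-! ### Open subgroups and dense homomorphisms -/

namespace Subgroup

variable {Γ G : Type*} [Group Γ] [Group G] [TopologicalSpace G] [IsTopologicalGroup G]
  {f : Γ →* G} {H : Subgroup G}

theorem exists_inv_mul_mem_of_denseRange (hf : DenseRange f) (hH : IsOpen (H : Set G))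
    (a : G) : ∃ γ, a⁻¹ * f γ ∈ H := by
  obtain ⟨γ, hγ⟩ := hf.exists_mem_open (hH.preimage (continuous_const_mul a⁻¹)) ⟨a, by simp⟩
  exact ⟨γ, hγ⟩

theorem index_comap_of_denseRange (hf : DenseRange f) (hH : IsOpen (H : Set G)) :
    (H.comap f).index = H.index := by
  have key : ∀ γ δ : Γ,
      QuotientGroup.leftRel (H.comap f) γ δ ↔ QuotientGroup.leftRel H (f γ) (f δ) := by
    simp [QuotientGroup.leftRel_apply]
  refine Nat.card_congr (Equiv.ofBijective (Quotient.map' f fun γ δ => (key γ δ).mp) ⟨?_, ?_⟩)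
  · rintro ⟨γ⟩ ⟨δ⟩ h
    exact Quotient.sound ((key γ δ).mpr (Quotient.exact h))
  · rintro ⟨a⟩
    obtain ⟨γ, hγ⟩ := exists_inv_mul_mem_of_denseRange hf hH a
    exact ⟨⟦γ⟧, (QuotientGroup.eq.mpr hγ).symm⟩

theorem comap_normalCore_of_denseRange (hf : DenseRange f) (hH : IsOpen (H : Set G)) :
    H.normalCore.comap f = (H.comap f).normalCore := by
  refine le_antisymm (fun γ hγ δ => by simpa using hγ (f δ)) fun γ hγ a => ?_
  obtain ⟨δ, hδ⟩ := exists_inv_mul_mem_of_denseRange hf hH a⁻¹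
  rw [inv_inv] at hδ
  have hconj : a * f γ * a⁻¹ = (a * f δ) * f (δ⁻¹ * γ * δ⁻¹⁻¹) * (a * f δ)⁻¹ := by
    simp only [map_mul, map_inv, inv_inv]; group
  rw [hconj]
  exact mul_mem (mul_mem hδ (hγ δ⁻¹)) (inv_mem hδ)

theorem isOpen_normalCore (hH : IsOpen (H : Set G)) [H.FiniteIndex] :
    IsOpen (H.normalCore : Set G) :=
  isOpen_of_isClosed_of_finiteIndex _ (normalCore_isClosed _ (isClosed_of_isOpen _ hH))

end Subgroup

/-! ### Group chains -/

theorem exists_seq_of_forall_exists_succ {α : Type*} {P : ℕ → α → Prop}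
    {R : ℕ → α → α → Prop} {a : α} (ha : P 0 a)
    (h : ∀ n a, P n a → ∃ b, P (n + 1) b ∧ R n a b) :
    ∃ s : ℕ → α, s 0 = a ∧ ∀ n, P n (s n) ∧ R n (s n) (s (n + 1)) := by
  choose f hfP hfR using h
  let t : (n : ℕ) → {b // P n b} := fun n =>
    Nat.rec ⟨a, ha⟩ (fun n b => ⟨f n b b.2, hfP n b b.2⟩) n
  exact ⟨fun n => (t n).1, rfl, fun n => ⟨(t n).2, hfR n _ (t n).2⟩⟩

namespace Subgroup

variable {Γ : Type*} [Group Γ] {Γs : ℕ → Subgroup Γ}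

theorem inv_mul_mem_of_forall_inv_mul_succ_mem (hΓs : Antitone Γs) {g : ℕ → Γ}
    (hg : ∀ j, (g j)⁻¹ * g (j + 1) ∈ Γs j) {j k : ℕ} (hjk : j ≤ k) : (g j)⁻¹ * g k ∈ Γs j := by
  induction k, hjk using Nat.le_induction with
  | base => simp
  | succ k hjk ih =>
    simpa [mul_assoc] using mul_mem ih (hΓs hjk (hg k))

theorem exists_le_forall_le_sup_normalCore (hΓs : Antitone Γs) [∀ j, (Γs j).FiniteIndex]
    (ℓ : ℕ) : ∃ M, ℓ ≤ M ∧ ∀ m, Γs M ≤ Γs m ⊔ (Γs ℓ).normalCore := by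
  let π := QuotientGroup.mk' (Γs ℓ).normalCore
  obtain ⟨M₀, hM₀⟩ := WellFoundedLT.antitone_chain_condition (f := fun m => (Γs m).map π)
    fun m m' h => map_mono (hΓs h)
  refine ⟨max ℓ M₀, le_max_left _ _, fun m => ?_⟩
  rcases le_total m (max ℓ M₀) with hm | hm
  · exact (hΓs hm).trans le_sup_left
  · calc Γs (max ℓ M₀) ≤ ((Γs M₀).map π).comap π :=
          (hΓs (le_max_right _ _)).trans (le_comap_map _ _)
      _ = ((Γs m).map π).comap π := by rw [hM₀ m ((le_max_right _ _).trans hm)]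
      _ = Γs m ⊔ (Γs ℓ).normalCore := by rw [comap_map_eq, QuotientGroup.ker_mk']

theorem exists_le_forall_exists_seq (hΓs : Antitone Γs) [∀ j, (Γs j).FiniteIndex] (ℓ : ℕ) :
    ∃ M, ℓ ≤ M ∧ ∀ g ∈ Γs M, ∃ s : ℕ → Γ, (∀ j, s j ∈ Γs j) ∧
      (∀ j, (s j)⁻¹ * s (j + 1) ∈ (Γs j).normalCore) ∧ s ℓ = g := by
  choose M hM hsup using exists_le_forall_le_sup_normalCore hΓs
  -- Mittag-Leffler: `b` is liftable at level `j` if its class in `Γ / C_j` lies in the image of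
  -- every `Γ_m`; the finiteness of `Γ / C_j` makes these images stabilize.
  let Liftable (j : ℕ) (b : Γ) : Prop := ∀ m, b ∈ Γs m ⊔ (Γs j).normalCore
  have mem_of_liftable {j b} (hb : Liftable j b) : b ∈ Γs j := by
    simpa [sup_eq_left.mpr (normalCore_le _)] using hb j
  have liftable_mono {j k b} (hjk : j ≤ k) (hb : Liftable k b) : Liftable j b := fun m =>
    sup_le_sup_left (normalCore_mono (hΓs hjk)) _ (hb m)
  have step {j b} (hb : Liftable j b) :
      ∃ b', Liftable (j + 1) b' ∧ b⁻¹ * b' ∈ (Γs j).normalCore := by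
    obtain ⟨y, hy, z, hz, rfl⟩ := mem_sup_of_normal_right.mp (hb (M (j + 1)))
    exact ⟨y, fun m => hsup (j + 1) m hy, by simpa using inv_mem hz⟩
  refine ⟨M ℓ, hM ℓ, fun g hg => ?_⟩
  have hgℓ : Liftable ℓ g := fun m => hsup ℓ m hg
  obtain ⟨s, -, hs⟩ := exists_seq_of_forall_exists_succ
    (P := fun j b => Liftable j b ∧ (j ≤ ℓ → b = g))
    (R := fun j b b' => b⁻¹ * b' ∈ (Γs j).normalCore)
    ⟨liftable_mono (Nat.zero_le ℓ) hgℓ, fun _ => rfl⟩ fun j b ⟨hb, hbg⟩ => by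
      by_cases hj : j + 1 ≤ ℓ
      · obtain rfl := hbg (by omega)
        exact ⟨b, ⟨liftable_mono hj hgℓ, fun _ => rfl⟩, by simp⟩
      · obtain ⟨b', hb', hbb'⟩ := step hb
        exact ⟨b', ⟨hb', fun h => absurd h hj⟩, hbb'⟩
  exact ⟨s, fun j => mem_of_liftable (hs j).1.1, fun j => (hs j).2, (hs ℓ).1.2 le_rfl⟩

theorem card_quotient_subgroupOf_eq_card_map {G : Type*} [Group G] (D N : Subgroup G)
    [N.Normal] : Nat.card (D ⧸ N.subgroupOf D) = Nat.card (D.map (QuotientGroup.mk' N)) := by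
  have hker : ((QuotientGroup.mk' N).comp D.subtype).ker = N.subgroupOf D := by
    rw [← MonoidHom.comap_ker, QuotientGroup.ker_mk']
    rfl
  have hrange : ((QuotientGroup.mk' N).comp D.subtype).range = D.map (QuotientGroup.mk' N) := by
    rw [MonoidHom.range_comp, range_subtype]
  rw [← hker, ← hrange]
  exact Nat.card_congr (QuotientGroup.quotientKerEquivRange _).toEquiv

end Subgroup

section ChainDinf

variable {Γ : Type*} [Group Γ] {Γs : ℕ → Subgroup Γ} (hle : ∀ ℓ, Γs (ℓ + 1) ≤ Γs ℓ)

theorem chainBond_mk_eq_mk_iff {j : ℕ} (a : Γs (j + 1)) (b : Γs j) :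
    chainBond Γs hle j (QuotientGroup.mk a : chainQuot Γs (j + 1)) =
        (QuotientGroup.mk b : chainQuot Γs j) ↔
      (b : Γ)⁻¹ * a ∈ (Γs j).normalCore :=
  eq_comm.trans (QuotientGroup.eq.trans Subgroup.mem_subgroupOf)

theorem mk_mem_chainDinf {g : ℕ → Γ} (hg : ∀ j, g j ∈ Γs j)
    (hcomp : ∀ j, (g j)⁻¹ * g (j + 1) ∈ (Γs j).normalCore) :
    (fun j => (QuotientGroup.mk ⟨g j, hg j⟩ : chainQuot Γs j)) ∈ chainDinf Γs hle :=
  fun j => (chainBond_mk_eq_mk_iff hle _ _).mpr (hcomp j)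

theorem exists_seq_of_mem_chainDinf {z : ∀ j, chainQuot Γs j} (hz : z ∈ chainDinf Γs hle) :
    ∃ (g : ℕ → Γ) (hg : ∀ j, g j ∈ Γs j),
      (∀ j, (g j)⁻¹ * g (j + 1) ∈ (Γs j).normalCore) ∧
        ∀ j, z j = QuotientGroup.mk ⟨g j, hg j⟩ := by
  choose w hw using fun j => QuotientGroup.mk_surjective (z j)
  refine ⟨fun j => w j, fun j => (w j).2, fun j => ?_, fun j => (hw j).symm⟩
  have := hz j
  rw [← hw, ← hw] at this
  exact (chainBond_mk_eq_mk_iff hle _ _).mp this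

end ChainDinf

/-! ### Homeomorphisms of a compact metric space -/

theorem Homeomorph.image_mul' {X : Type*} [TopologicalSpace X] (f g : X ≃ₜ X) (s : Set X) :
    ⇑(f * g) '' s = f '' (g '' s) :=
  Set.image_comp f g s

theorem Homeomorph.continuous_eval_const {Y : Type*} [MetricSpace Y] [CompactSpace Y] (y : Y) :
    Continuous fun f : Y ≃ₜ Y => f y :=
  (LipschitzWith.of_dist_le_mul (K := 1) fun f g => by simpa using dist_apply_le f g y).continuous

open Filter in
theorem Homeomorph.exists_tendsto_of_cauchySeq {Y : Type*} [MetricSpace Y] [CompactSpace Y]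
    {f : ℕ → Y ≃ₜ Y} (hf : CauchySeq f) (hf' : CauchySeq fun n => (f n).symm) :
    ∃ F : Y ≃ₜ Y, Tendsto f atTop (𝓝 F) := by
  let toC : (Y ≃ₜ Y) → C(Y, Y) := fun h => ⟨h, h.continuous⟩
  have hiso : Isometry toC := Isometry.of_dist_eq fun _ _ => rfl
  obtain ⟨A, hA⟩ := cauchySeq_tendsto_of_complete (hiso.uniformContinuous.comp_cauchySeq hf)
  obtain ⟨B, hB⟩ := cauchySeq_tendsto_of_complete (hiso.uniformContinuous.comp_cauchySeq hf')
  have comp_eq_id {A B : C(Y, Y)} {a b : ℕ → C(Y, Y)} (ha : Tendsto a atTop (𝓝 A))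
      (hb : Tendsto b atTop (𝓝 B)) (hab : ∀ n, (a n).comp (b n) = .id Y) :
      A.comp B = .id Y :=
    tendsto_nhds_unique ((ContinuousMap.continuous_comp'.tendsto (B, A)).comp (hb.prodMk_nhds ha))
      (by simp only [Function.comp_def, hab, tendsto_const_nhds])
  have hAB := comp_eq_id hA hB fun n => ContinuousMap.ext (f n).apply_symm_apply
  have hBA := comp_eq_id hB hA fun n => ContinuousMap.ext (f n).symm_apply_apply
  let F : Y ≃ₜ Y :=
    { toFun := A, invFun := B, left_inv := fun y => congr($hBA y),
      right_inv := fun y => congr($hAB y), continuous_toFun := A.continuous,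
      continuous_invFun := B.continuous }
  exact ⟨F, hiso.isEmbedding.tendsto_nhds_iff.mpr hA⟩

theorem IsClopen.exists_pos_image_eq_of_dist_lt {X : Type*} [MetricSpace X] [CompactSpace X]
    {U : Set X} (hU : IsClopen U) :
    ∃ η > 0, ∀ f : X ≃ₜ X, (∀ y, dist (f y) y < η) → f '' U = U := by
  have invariant {V : Set X} (hV : IsClopen V) :
      ∃ η > 0, ∀ f : X ≃ₜ X, (∀ y, dist (f y) y < η) → f '' V ⊆ V := by
    obtain ⟨η, hη, hsub⟩ := hV.isClosed.isCompact.exists_thickening_subset_open hV.isOpen le_rfl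
    exact ⟨η, hη, fun f hf => Set.image_subset_iff.mpr fun y hy =>
      hsub (Metric.mem_thickening_iff.mpr ⟨y, hy, hf y⟩)⟩
  obtain ⟨η₁, hη₁, h₁⟩ := invariant hU
  obtain ⟨η₂, hη₂, h₂⟩ := invariant hU.compl
  refine ⟨min η₁ η₂, lt_min hη₁ hη₂, fun f hf => (h₁ f fun y => (hf y).trans_le
    (min_le_left _ _)).antisymm ?_⟩
  have hcompl := h₂ f fun y => (hf y).trans_le (min_le_right _ _)
  rwa [Set.image_compl_eq f.bijective, Set.compl_subset_compl] at hcompl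

/-! ### Adapted sets and the closure `G(Φ)` -/

section AdaptedSets

variable {X : Type*} [MetricSpace X] {Γ : Type*} [Group Γ] {Φ : Γ →* (X ≃ₜ X)} {U : Set X}

theorem mem_adaptedStabilizer_iff {g : Γ} : g ∈ adaptedStabilizer Φ U ↔ Φ g '' U = U :=
  Iff.rfl

theorem IsAdaptedSet.image_eq_of_nonempty_inter (hU : IsAdaptedSet Φ U) {g h : Γ}
    (hgh : (Φ g '' U ∩ Φ h '' U).Nonempty) : Φ g '' U = Φ h '' U := by
  have hne : (Φ (h⁻¹ * g) '' U ∩ U).Nonempty := by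
    obtain ⟨z, hzg, hzh⟩ := hgh
    refine ⟨(Φ h).symm z, ?_, ?_⟩
    · rw [map_mul, Homeomorph.image_mul', map_inv, Homeomorph.inv_eq_symm]
      exact Set.mem_image_of_mem _ hzg
    · obtain ⟨u, hu, rfl⟩ := hzh
      simpa using hu
  have := congrArg (Φ h '' ·) (hU.2.2 _ hne)
  simpa [← Homeomorph.image_mul', ← map_mul] using this

theorem IsAdaptedSet.exists_mem_image (hmin : IsMinimalAction Φ) (hU : IsAdaptedSet Φ U)
    (y : X) : ∃ g, y ∈ Φ g '' U := by
  obtain ⟨_, ⟨g, rfl⟩, hg⟩ := (hmin y).exists_mem_open hU.2.1.isOpen hU.1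
  exact ⟨g⁻¹, Φ g y, hg, by simp⟩

theorem IsAdaptedSet.finiteIndex_adaptedStabilizer [CompactSpace X] (hmin : IsMinimalAction Φ)
    (hU : IsAdaptedSet Φ U) : (adaptedStabilizer Φ U).FiniteIndex := by
  obtain ⟨t, ht⟩ := isCompact_univ.elim_finite_subcover (fun g => Φ g '' U)
    (fun g => (Φ g).isOpenMap _ hU.2.1.isOpen)
    fun y _ => Set.mem_iUnion.mpr (hU.exists_mem_image hmin y)
  suffices Finite (Γ ⧸ adaptedStabilizer Φ U) from Subgroup.finiteIndex_of_finite_quotient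
  refine Finite.of_surjective (fun h : t => (h : Γ ⧸ adaptedStabilizer Φ U)) fun q => ?_
  obtain ⟨g, rfl⟩ := QuotientGroup.mk_surjective q
  obtain ⟨u, hu⟩ := hU.1
  obtain ⟨h, hh, hgh⟩ := Set.mem_iUnion₂.mp (ht (Set.mem_univ (Φ g u)))
  refine ⟨⟨h, hh⟩, QuotientGroup.eq.mpr ?_⟩
  rw [mem_adaptedStabilizer_iff, map_mul, Homeomorph.image_mul',
    hU.image_eq_of_nonempty_inter ⟨Φ g u, ⟨u, hu, rfl⟩, hgh⟩, ← Homeomorph.image_mul', ← map_mul,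
    inv_mul_cancel, map_one]
  exact Set.image_id U

end AdaptedSets

section ProfiniteClosure

variable {X : Type*} [MetricSpace X] [CompactSpace X] {Γ : Type*} [Group Γ]
  {Φ : Γ →* (X ≃ₜ X)} {U : Set X}

variable (Φ) in
def toProfiniteClosure : Γ →* profiniteClosure Φ :=
  Φ.codRestrict _ fun g => Φ.range.le_topologicalClosure ⟨g, rfl⟩

@[simp] theorem coe_toProfiniteClosure (g : Γ) : (toProfiniteClosure Φ g : X ≃ₜ X) = Φ g := rfl

theorem denseRange_toProfiniteClosure : DenseRange (toProfiniteClosure Φ) := by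
  rw [DenseRange, Topology.IsInducing.subtypeVal.dense_iff]
  rintro ⟨a, ha⟩
  rwa [← Set.range_comp]

variable (Φ U) in
def closureStabilizer : Subgroup (profiniteClosure Φ) :=
  adaptedStabilizer (profiniteClosure Φ).subtype U

theorem mem_closureStabilizer_iff {a : profiniteClosure Φ} :
    a ∈ closureStabilizer Φ U ↔ (a : X ≃ₜ X) '' U = U := Iff.rfl

theorem isOpen_closureStabilizer (hU : IsClopen U) :
    IsOpen (closureStabilizer Φ U : Set (profiniteClosure Φ)) := by
  obtain ⟨η, hη, hfix⟩ := hU.exists_pos_image_eq_of_dist_lt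
  refine (closureStabilizer Φ U).isOpen_of_mem_nhds (g := 1)
    (Metric.mem_nhds_iff.mpr ⟨η, hη, fun a ha => hfix a fun y => ?_⟩)
  exact (Homeomorph.dist_apply_le (a : X ≃ₜ X) 1 y).trans_lt ha

theorem exists_image_eq_image (hU : IsClopen U) (a : profiniteClosure Φ) :
    ∃ g, Φ g '' U = (a : X ≃ₜ X) '' U := by
  obtain ⟨g, hg⟩ := Subgroup.exists_inv_mul_mem_of_denseRange denseRange_toProfiniteClosure
    (isOpen_closureStabilizer hU) a
  refine ⟨g, ?_⟩
  have := congrArg ((a : X ≃ₜ X) '' ·) (mem_closureStabilizer_iff.mp hg)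
  simpa [← Homeomorph.image_mul', mul_assoc, -Homeomorph.inv_eq_symm] using this

theorem IsAdaptedSet.profiniteClosure_subtype (hU : IsAdaptedSet Φ U) :
    IsAdaptedSet (profiniteClosure Φ).subtype U := by
  refine ⟨hU.1, hU.2.1, fun a ha => ?_⟩
  obtain ⟨g, hg⟩ := exists_image_eq_image hU.2.1 a
  rw [Subgroup.coe_subtype, ← hg] at ha ⊢
  exact hU.2.2 g ha

theorem discriminant_le_closureStabilizer (hU : IsAdaptedSet Φ U) {x : X} (hx : x ∈ U) :
    discriminant Φ x ≤ closureStabilizer Φ U :=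
  fun d hd => hU.profiniteClosure_subtype.2.2 d ⟨x, ⟨x, hx, hd⟩, hx⟩

theorem index_closureStabilizer (hU : IsClopen U) :
    (closureStabilizer Φ U).index = (adaptedStabilizer Φ U).index :=
  (Subgroup.index_comap_of_denseRange denseRange_toProfiniteClosure
    (isOpen_closureStabilizer hU)).symm

theorem finiteIndex_closureStabilizer (hmin : IsMinimalAction Φ) (hU : IsAdaptedSet Φ U) :
    (closureStabilizer Φ U).FiniteIndex := by
  have := hU.finiteIndex_adaptedStabilizer hmin
  exact ⟨by rw [index_closureStabilizer hU.2.1]; exact Subgroup.FiniteIndex.index_ne_zero⟩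

theorem isOpen_normalCore_closureStabilizer (hmin : IsMinimalAction Φ)
    (hU : IsAdaptedSet Φ U) :
    IsOpen ((closureStabilizer Φ U).normalCore : Set (profiniteClosure Φ)) :=
  haveI := finiteIndex_closureStabilizer hmin hU
  Subgroup.isOpen_normalCore (isOpen_closureStabilizer hU.2.1)

theorem comap_normalCore_closureStabilizer (hU : IsClopen U) :
    (closureStabilizer Φ U).normalCore.comap (toProfiniteClosure Φ) =
      (adaptedStabilizer Φ U).normalCore :=
  Subgroup.comap_normalCore_of_denseRange denseRange_toProfiniteClosure
    (isOpen_closureStabilizer hU)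

theorem toProfiniteClosure_mem_normalCore_iff (hU : IsClopen U) {c : Γ} :
    toProfiniteClosure Φ c ∈ (closureStabilizer Φ U).normalCore ↔
      c ∈ (adaptedStabilizer Φ U).normalCore := by
  rw [← Subgroup.mem_comap, comap_normalCore_closureStabilizer hU]

theorem index_normalCore_closureStabilizer (hmin : IsMinimalAction Φ) (hU : IsAdaptedSet Φ U) :
    (closureStabilizer Φ U).normalCore.index = (adaptedStabilizer Φ U).normalCore.index := by
  rw [← comap_normalCore_closureStabilizer hU.2.1, Subgroup.index_comap_of_denseRange
    denseRange_toProfiniteClosure (isOpen_normalCore_closureStabilizer hmin hU)]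

theorem image_image_eq_of_mem_normalCore {a : profiniteClosure Φ}
    (ha : a ∈ (closureStabilizer Φ U).normalCore) (h : Γ) :
    (a : X ≃ₜ X) '' (Φ h '' U) = Φ h '' U := by
  have := congrArg (Φ h '' ·) (mem_closureStabilizer_iff.mp (ha (toProfiniteClosure Φ h)⁻¹))
  simpa [← Homeomorph.image_mul', mul_assoc, -Homeomorph.inv_eq_symm] using this

theorem mem_adaptedStabilizer_of_inv_mul_mem {a : profiniteClosure Φ}
    (ha : a ∈ closureStabilizer Φ U) {g : Γ}
    (hg : a⁻¹ * toProfiniteClosure Φ g ∈ (closureStabilizer Φ U).normalCore) :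
    g ∈ adaptedStabilizer Φ U := by
  show toProfiniteClosure Φ g ∈ closureStabilizer Φ U
  simpa using mul_mem ha (Subgroup.normalCore_le _ hg)

end ProfiniteClosure

/-! ### Adapted neighborhood bases -/

section AdaptedBasis

open Filter

variable {X : Type*} [MetricSpace X] {Γ : Type*} [Group Γ]

structure IsAdaptedBasis (Φ : Γ →* (X ≃ₜ X)) (x : X) (U : ℕ → Set X) : Prop where
  isAdaptedSet : ∀ ℓ, IsAdaptedSet Φ (U ℓ)
  mem : ∀ ℓ, x ∈ U ℓ
  antitone : Antitone U
  iInter_eq : ⋂ ℓ, U ℓ = {x}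

namespace IsAdaptedBasis

variable {Φ : Γ →* (X ≃ₜ X)} {x : X} {U : ℕ → Set X} (hU : IsAdaptedBasis Φ x U)
include hU

theorem antitone_adaptedStabilizer : Antitone fun ℓ => adaptedStabilizer Φ (U ℓ) :=
  fun _ _ h => adaptedStabilizer_mono Φ (hU.antitone h) (hU.isAdaptedSet _) (hU.isAdaptedSet _)

variable [CompactSpace X]

theorem profiniteClosure_subtype : IsAdaptedBasis (profiniteClosure Φ).subtype x U :=
  ⟨fun ℓ => (hU.isAdaptedSet ℓ).profiniteClosure_subtype, hU.mem, hU.antitone, hU.iInter_eq⟩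

theorem antitone_normalCore_closureStabilizer :
    Antitone fun ℓ => (closureStabilizer Φ (U ℓ)).normalCore :=
  fun _ _ h => Subgroup.normalCore_mono (hU.profiniteClosure_subtype.antitone_adaptedStabilizer h)

theorem eventually_subset_ball {r : ℝ} (hr : 0 < r) : ∀ᶠ ℓ in atTop, U ℓ ⊆ Metric.ball x r := by
  obtain ⟨ℓ₀, hℓ₀⟩ := exists_subset_nhds_of_isCompact (U := Metric.ball x r)
    hU.antitone.directed_ge (fun ℓ => (hU.isAdaptedSet ℓ).2.1.isClosed.isCompact) fun y hy => by
      rw [hU.iInter_eq, Set.mem_singleton_iff] at hy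
      exact hy ▸ Metric.ball_mem_nhds x hr
  exact eventually_atTop.mpr ⟨ℓ₀, fun ℓ hℓ => (hU.antitone hℓ).trans hℓ₀⟩

theorem eventually_forall_dist_lt (heqc : IsEquicontinuousAction Φ) {ε : ℝ} (hε : 0 < ε) :
    ∀ᶠ ℓ in atTop, ∀ g, ∀ y ∈ Φ g '' U ℓ, ∀ z ∈ Φ g '' U ℓ, dist y z < ε := by
  obtain ⟨δ, hδ, hδε⟩ := heqc ε hε
  filter_upwards [hU.eventually_subset_ball (half_pos hδ)] with ℓ hℓ
  rintro g _ ⟨u, hu, rfl⟩ _ ⟨v, hv, rfl⟩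
  refine hδε u v ?_ g
  have hu' := Metric.mem_ball.mp (hℓ hu)
  have hv' := Metric.mem_ball'.mp (hℓ hv)
  linarith [dist_triangle u x v]

theorem eventually_dist_apply_lt_of_mem_normalCore (hmin : IsMinimalAction Φ)
    (heqc : IsEquicontinuousAction Φ) {ε : ℝ} (hε : 0 < ε) :
    ∀ᶠ ℓ in atTop, ∀ a ∈ (closureStabilizer Φ (U ℓ)).normalCore, ∀ y,
      dist ((a : X ≃ₜ X) y) y < ε := by
  filter_upwards [hU.eventually_forall_dist_lt heqc hε] with ℓ hℓ a ha y
  obtain ⟨g, hy⟩ := (hU.isAdaptedSet ℓ).exists_mem_image hmin y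
  exact hℓ g _ (image_image_eq_of_mem_normalCore ha g ▸ Set.mem_image_of_mem _ hy) y hy

theorem exists_normalCore_le (hmin : IsMinimalAction Φ) (heqc : IsEquicontinuousAction Φ)
    {K : Subgroup (profiniteClosure Φ)} (hK : IsOpen (K : Set (profiniteClosure Φ))) :
    ∃ ℓ, (closureStabilizer Φ (U ℓ)).normalCore ≤ K := by
  obtain ⟨δ, hδ, hball⟩ := Metric.isOpen_iff.mp hK 1 K.one_mem
  obtain ⟨ℓ, hℓ⟩ := (hU.eventually_dist_apply_lt_of_mem_normalCore hmin heqc hδ).exists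
  refine ⟨ℓ, fun a ha => hball ?_⟩
  rw [Metric.mem_ball, Subtype.dist_eq]
  exact (Homeomorph.dist_lt_iff' _ _ hδ).mpr (by simpa using hℓ a ha)

theorem mem_discriminant_of_tendsto {g : ℕ → Γ} (hg : ∀ j, g j ∈ adaptedStabilizer Φ (U j))
    {d : profiniteClosure Φ}
    (hd : Tendsto (fun j => toProfiniteClosure Φ (g j)) atTop (𝓝 d)) :
    d ∈ discriminant Φ x := by
  have hlim : Tendsto (fun j => Φ (g j) x) atTop (𝓝 ((d : X ≃ₜ X) x)) :=
    ((Homeomorph.continuous_eval_const x).tendsto _).comp (tendsto_subtype_rng.mp hd)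
  refine tendsto_nhds_unique hlim (Metric.tendsto_nhds.mpr fun r hr => ?_)
  filter_upwards [hU.eventually_subset_ball hr] with j hj
  exact hj (mem_adaptedStabilizer_iff.mp (hg j) ▸ Set.mem_image_of_mem _ (hU.mem j))

theorem exists_seq_of_mem_discriminant (hmin : IsMinimalAction Φ) {d : profiniteClosure Φ}
    (hd : d ∈ discriminant Φ x) :
    ∃ g : ℕ → Γ, (∀ j, g j ∈ adaptedStabilizer Φ (U j)) ∧
      (∀ j, (g j)⁻¹ * g (j + 1) ∈ (adaptedStabilizer Φ (U j)).normalCore) ∧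
        ∀ j, d⁻¹ * toProfiniteClosure Φ (g j) ∈ (closureStabilizer Φ (U j)).normalCore := by
  choose g hg using fun j => Subgroup.exists_inv_mul_mem_of_denseRange
    denseRange_toProfiniteClosure (isOpen_normalCore_closureStabilizer hmin (hU.isAdaptedSet j)) d
  refine ⟨g, fun j => mem_adaptedStabilizer_of_inv_mul_mem
    (discriminant_le_closureStabilizer (hU.isAdaptedSet j) (hU.mem j) hd) (hg j), fun j => ?_, hg⟩
  refine (toProfiniteClosure_mem_normalCore_iff (hU.isAdaptedSet j).2.1).mp ?_
  simpa [mul_assoc] using mul_mem (inv_mem (hg j))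
    (hU.antitone_normalCore_closureStabilizer (Nat.le_succ j) (hg (j + 1)))

section CompatibleSequences

variable {g : ℕ → Γ}
  (hcomp : ∀ j, (g j)⁻¹ * g (j + 1) ∈ (adaptedStabilizer Φ (U j)).normalCore)
include hcomp

theorem toProfiniteClosure_inv_mul_mem_normalCore {j k : ℕ} (hjk : j ≤ k) :
    toProfiniteClosure Φ ((g j)⁻¹ * g k) ∈ (closureStabilizer Φ (U j)).normalCore :=
  (toProfiniteClosure_mem_normalCore_iff (hU.isAdaptedSet j).2.1).mpr
    (Subgroup.inv_mul_mem_of_forall_inv_mul_succ_mem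
      (fun _ _ h => Subgroup.normalCore_mono (hU.antitone_adaptedStabilizer h)) hcomp hjk)

theorem exists_tendsto_toProfiniteClosure (hmin : IsMinimalAction Φ)
    (heqc : IsEquicontinuousAction Φ) :
    ∃ d, Tendsto (fun j => toProfiniteClosure Φ (g j)) atTop (𝓝 d) := by
  have hcauchy : CauchySeq fun j => Φ (g j) := by
    refine Metric.cauchySeq_iff'.mpr fun ε hε => ?_
    obtain ⟨δ, hδ, hδε⟩ := heqc ε hε
    obtain ⟨J, hJ⟩ := (hU.eventually_dist_apply_lt_of_mem_normalCore hmin heqc hδ).exists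
    refine ⟨J, fun n hn => (Homeomorph.dist_lt_iff' _ _ hε).mpr fun y => ?_⟩
    have := hδε _ y (hJ _ (hU.toProfiniteClosure_inv_mul_mem_normalCore hcomp hn) y) (g J)
    rwa [coe_toProfiniteClosure, map_mul, Homeomorph.mul_apply', map_inv, Homeomorph.inv_eq_symm,
      Homeomorph.apply_symm_apply] at this
  have hcauchy' : CauchySeq fun j => (Φ (g j)).symm := by
    refine Metric.cauchySeq_iff'.mpr fun ε hε => ?_
    obtain ⟨J, hJ⟩ := (hU.eventually_dist_apply_lt_of_mem_normalCore hmin heqc hε).exists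
    refine ⟨J, fun n hn => (Homeomorph.dist_lt_iff' _ _ hε).mpr fun y => ?_⟩
    have := hJ _ (inv_mem (hU.toProfiniteClosure_inv_mul_mem_normalCore hcomp hn))
      ((Φ (g J)).symm y)
    simpa using this
  obtain ⟨F, hF⟩ := Homeomorph.exists_tendsto_of_cauchySeq hcauchy hcauchy'
  have hFmem : F ∈ profiniteClosure Φ := by
    rw [← SetLike.mem_coe, profiniteClosure, Subgroup.topologicalClosure_coe]
    exact mem_closure_of_tendsto hF (Eventually.of_forall fun j => ⟨g j, rfl⟩)
  exact ⟨⟨F, hFmem⟩, tendsto_subtype_rng.mpr hF⟩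

theorem inv_mul_mem_normalCore_of_tendsto (hmin : IsMinimalAction Φ) {d : profiniteClosure Φ}
    (hd : Tendsto (fun j => toProfiniteClosure Φ (g j)) atTop (𝓝 d)) (j : ℕ) :
    (toProfiniteClosure Φ (g j))⁻¹ * d ∈ (closureStabilizer Φ (U j)).normalCore :=
  (Subgroup.isClosed_of_isOpen _
    (isOpen_normalCore_closureStabilizer hmin (hU.isAdaptedSet j))).mem_of_tendsto
    (hd.const_mul _) (eventually_atTop.mpr ⟨j, fun k hk => by
      simpa using hU.toProfiniteClosure_inv_mul_mem_normalCore hcomp hk⟩)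

theorem exists_mem_discriminant_inv_mul_mem_normalCore (hmin : IsMinimalAction Φ)
    (heqc : IsEquicontinuousAction Φ) (hg : ∀ j, g j ∈ adaptedStabilizer Φ (U j)) :
    ∃ d ∈ discriminant Φ x, ∀ j,
      (toProfiniteClosure Φ (g j))⁻¹ * d ∈ (closureStabilizer Φ (U j)).normalCore := by
  obtain ⟨d, hd⟩ := hU.exists_tendsto_toProfiniteClosure hcomp hmin heqc
  exact ⟨d, hU.mem_discriminant_of_tendsto hg hd,
    hU.inv_mul_mem_normalCore_of_tendsto hcomp hmin hd⟩

end CompatibleSequences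

variable (hmin : IsMinimalAction Φ) (heqc : IsEquicontinuousAction Φ)
include hmin heqc

theorem exists_closureStabilizer_le_sup_discriminant (ℓ : ℕ) :
    ∃ M, closureStabilizer Φ (U M) ≤
      (closureStabilizer Φ (U ℓ)).normalCore ⊔ discriminant Φ x := by
  have := fun j => (hU.isAdaptedSet j).finiteIndex_adaptedStabilizer hmin
  obtain ⟨M, hℓM, hM⟩ := Subgroup.exists_le_forall_exists_seq hU.antitone_adaptedStabilizer ℓ
  refine ⟨M, fun a ha => ?_⟩
  obtain ⟨g, hg⟩ := Subgroup.exists_inv_mul_mem_of_denseRange denseRange_toProfiniteClosure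
    (isOpen_normalCore_closureStabilizer hmin (hU.isAdaptedSet M)) a
  obtain ⟨s, hs, hcomp, rfl⟩ := hM g (mem_adaptedStabilizer_of_inv_mul_mem ha hg)
  obtain ⟨d, hd, hdN⟩ := hU.exists_mem_discriminant_inv_mul_mem_normalCore hcomp hmin heqc hs
  have hgN := hU.antitone_normalCore_closureStabilizer hℓM hg
  have hdecomp : a = d * (((toProfiniteClosure Φ (s ℓ))⁻¹ * d)⁻¹ *
      (a⁻¹ * toProfiniteClosure Φ (s ℓ))⁻¹) := by group
  rw [hdecomp]
  exact mul_mem (le_sup_right (a := Subgroup.normalCore _) hd)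
    (le_sup_left (b := discriminant Φ x) (mul_mem (inv_mem (hdN ℓ)) (inv_mem hgN)))

theorem card_map_eval_chainDinf (hle : ∀ j, adaptedStabilizer Φ (U (j + 1)) ≤
    adaptedStabilizer Φ (U j)) (ℓ : ℕ) :
    Nat.card ((chainDinf (fun j => adaptedStabilizer Φ (U j)) hle).map
        (Pi.evalMonoidHom (chainQuot fun j => adaptedStabilizer Φ (U j)) ℓ)) =
      Nat.card (discriminant Φ x ⧸
        (closureStabilizer Φ (U ℓ)).normalCore.subgroupOf (discriminant Φ x)) := by
  set Γs := fun j => adaptedStabilizer Φ (U j)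
  set N := fun j => (closureStabilizer Φ (U j)).normalCore
  have hN {j} {g : Γ} : toProfiniteClosure Φ g ∈ N j ↔ g ∈ (Γs j).normalCore :=
    toProfiniteClosure_mem_normalCore_iff (hU.isAdaptedSet j).2.1
  -- `Γ_ℓ / C_ℓ` embeds into `G(Φ) / N_ℓ`; the images of `D_∞` and of `D(Φ, x)` coincide.
  let κ : chainQuot Γs ℓ →* profiniteClosure Φ ⧸ N ℓ :=
    QuotientGroup.map _ _ ((toProfiniteClosure Φ).comp (Γs ℓ).subtype) fun w hw =>
      hN.mpr (Subgroup.mem_subgroupOf.mp hw)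
  have hκ (w : Γs ℓ) : κ (QuotientGroup.mk w) = QuotientGroup.mk (toProfiniteClosure Φ w) := rfl
  have hκinj : Function.Injective κ := by
    rintro ⟨v⟩ ⟨w⟩ h
    refine QuotientGroup.eq.mpr (Subgroup.mem_subgroupOf.mpr (hN.mp ?_))
    simpa using QuotientGroup.eq.mp h
  have himage : ((chainDinf Γs hle).map (Pi.evalMonoidHom (chainQuot Γs) ℓ)).map κ =
      (discriminant Φ x).map (QuotientGroup.mk' (N ℓ)) := by
    ext q
    simp only [Subgroup.mem_map]
    constructor
    · rintro ⟨_, ⟨z, hz, rfl⟩, rfl⟩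
      obtain ⟨g, hg, hcomp, hzg⟩ := exists_seq_of_mem_chainDinf hle hz
      obtain ⟨d, hd, hdN⟩ :=
        hU.exists_mem_discriminant_inv_mul_mem_normalCore hcomp hmin heqc hg
      refine ⟨d, hd, ?_⟩
      rw [Pi.evalMonoidHom_apply, hzg ℓ, hκ]
      exact QuotientGroup.eq.mpr (by simpa using inv_mem (hdN ℓ))
    · rintro ⟨d, hd, rfl⟩
      obtain ⟨g, hgΓ, hcomp, hg⟩ := hU.exists_seq_of_mem_discriminant hmin hd
      refine ⟨_, ⟨_, mk_mem_chainDinf hle hgΓ hcomp, rfl⟩, ?_⟩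
      exact (hκ ⟨g ℓ, hgΓ ℓ⟩).trans (QuotientGroup.eq.mpr (by simpa using inv_mem (hg ℓ)))
  rw [← Subgroup.card_map_of_injective hκinj, himage,
    Subgroup.card_quotient_subgroupOf_eq_card_map]

open SteinitzNum

theorem lcmSet_eq_of_normalCore_closureStabilizer (c : Subgroup (profiniteClosure Φ) → ℕ)
    (hc : ∀ {K K' : Subgroup (profiniteClosure Φ)}, K ≤ K' → c K' ∣ c K)
    (hc0 : ∀ ℓ, c (closureStabilizer Φ (U ℓ)).normalCore ≠ 0) :
    lcmSet {n | ∃ K : Subgroup (profiniteClosure Φ), K.Normal ∧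
        IsOpen (K : Set (profiniteClosure Φ)) ∧ n = c K} =
      lcmSet (Set.range fun ℓ => c (closureStabilizer Φ (U ℓ)).normalCore) :=
  lcmSet_eq_of_cofinal c hc (fun _ => Subgroup.normalCore_normal _)
    (fun ℓ => isOpen_normalCore_closureStabilizer hmin (hU.isAdaptedSet ℓ))
    (fun _ hK => hU.exists_normalCore_le hmin heqc hK) hc0

theorem steinitzOrderAction_eq :
    steinitzOrderAction Φ =
      lcmSet (Set.range fun ℓ => (adaptedStabilizer Φ (U ℓ)).normalCore.index) := by
  have := fun ℓ => finiteIndex_closureStabilizer hmin (hU.isAdaptedSet ℓ)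
  calc steinitzOrderAction Φ
      = lcmSet (Set.range fun ℓ => (closureStabilizer Φ (U ℓ)).normalCore.index) :=
        hU.lcmSet_eq_of_normalCore_closureStabilizer hmin heqc Subgroup.index
          Subgroup.index_dvd_of_le fun _ => Subgroup.FiniteIndex.index_ne_zero
    _ = _ := by simp_rw [index_normalCore_closureStabilizer hmin (hU.isAdaptedSet _)]

theorem steinitzOrderRel_eq :
    steinitzOrderRel Φ x = lcmSet (Set.range fun ℓ => (adaptedStabilizer Φ (U ℓ)).index) := by
  have := fun ℓ => finiteIndex_closureStabilizer hmin (hU.isAdaptedSet ℓ)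
  have := fun ℓ => (hU.isAdaptedSet ℓ).finiteIndex_adaptedStabilizer hmin
  calc steinitzOrderRel Φ x
      = lcmSet (Set.range fun ℓ =>
          ((closureStabilizer Φ (U ℓ)).normalCore ⊔ discriminant Φ x).index) :=
        hU.lcmSet_eq_of_normalCore_closureStabilizer hmin heqc (fun K => (K ⊔ _).index)
          (fun h => Subgroup.index_dvd_of_le (sup_le_sup_right h _))
          fun _ => (Subgroup.finiteIndex_of_le le_sup_left).index_ne_zero
    _ = _ := by
      refine lcmSet_eq_of_forall_dvd ?_ ?_
      · rintro _ ⟨ℓ, rfl⟩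
        obtain ⟨M, hM⟩ := hU.exists_closureStabilizer_le_sup_discriminant hmin heqc ℓ
        refine ⟨_, ⟨M, rfl⟩, ?_, Subgroup.FiniteIndex.index_ne_zero⟩
        dsimp only
        rw [← index_closureStabilizer (hU.isAdaptedSet M).2.1]
        exact Subgroup.index_dvd_of_le hM
      · rintro _ ⟨ℓ, rfl⟩
        refine ⟨_, ⟨ℓ, rfl⟩, ?_, (Subgroup.finiteIndex_of_le le_sup_left).index_ne_zero⟩
        dsimp only
        rw [← index_closureStabilizer (hU.isAdaptedSet ℓ).2.1]
        exact Subgroup.index_dvd_of_le (sup_le (Subgroup.normalCore_le _)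
          (discriminant_le_closureStabilizer (hU.isAdaptedSet ℓ) (hU.mem ℓ)))

theorem steinitzOrderDisc_eq
    (hle : ∀ j, adaptedStabilizer Φ (U (j + 1)) ≤ adaptedStabilizer Φ (U j)) :
    steinitzOrderDisc Φ x = lcmSet (Set.range fun ℓ =>
      Nat.card ((chainDinf (fun j => adaptedStabilizer Φ (U j)) hle).map
        (Pi.evalMonoidHom (chainQuot fun j => adaptedStabilizer Φ (U j)) ℓ))) := by
  have := fun ℓ => finiteIndex_closureStabilizer hmin (hU.isAdaptedSet ℓ)
  calc steinitzOrderDisc Φ x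
      = lcmSet (Set.range fun ℓ =>
          ((closureStabilizer Φ (U ℓ)).normalCore.subgroupOf (discriminant Φ x)).index) :=
        hU.lcmSet_eq_of_normalCore_closureStabilizer hmin heqc (fun K => (K.subgroupOf _).index)
          (fun h => Subgroup.index_dvd_of_le (Subgroup.comap_mono h))
          fun _ => Subgroup.FiniteIndex.index_ne_zero
    _ = _ := by simp_rw [hU.card_map_eval_chainDinf hmin heqc hle, Subgroup.index]

end IsAdaptedBasis

end AdaptedBasis

theorem steinitzOrders_eq_of_groupChain_general
    {X : Type*} [MetricSpace X] [CompactSpace X]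
    {Γ : Type*} [Group Γ] (Φ : Γ →* (X ≃ₜ X))
    (hmin : IsMinimalAction Φ) (heqc : IsEquicontinuousAction Φ)
    (x : X) (U : ℕ → Set X)
    (hadapt : ∀ ℓ, IsAdaptedSet Φ (U ℓ)) (hx : ∀ ℓ, x ∈ U ℓ)
    (hproper : ∀ ℓ, U (ℓ + 1) ⊂ U ℓ) (hinter : (⋂ ℓ, U ℓ) = {x}) :
    steinitzOrderAction Φ =
        SteinitzNum.lcmSet
          (Set.range fun ℓ => ((adaptedStabilizer Φ (U ℓ)).normalCore).index) ∧
      steinitzOrderRel Φ x =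
        SteinitzNum.lcmSet (Set.range fun ℓ => (adaptedStabilizer Φ (U ℓ)).index) ∧
      steinitzOrderDisc Φ x =
        SteinitzNum.lcmSet (Set.range fun ℓ =>
          Nat.card
            ↥((chainDinf (fun j => adaptedStabilizer Φ (U j))
                (fun j => adaptedStabilizer_mono Φ (hproper j).subset
                  (hadapt j) (hadapt (j + 1)))).map
              (Pi.evalMonoidHom (chainQuot fun j => adaptedStabilizer Φ (U j)) ℓ))) := by
  have hU : IsAdaptedBasis Φ x U :=
    ⟨hadapt, hx, antitone_nat_of_succ_le fun ℓ => (hproper ℓ).subset, hinter⟩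
  exact ⟨hU.steinitzOrderAction_eq hmin heqc, hU.steinitzOrderRel_eq hmin heqc,
    hU.steinitzOrderDisc_eq hmin heqc _⟩

/-- Computation of the three Steinitz orders of a minimal
equicontinuous Cantor action from the group chain of stabilizers of an adapted
neighborhood basis at `x`:
`Π[G(Φ)] = LCM{[Γ : C_ℓ]}`, `Π[G(Φ):D(Φ,x)] = LCM{[Γ : Γ_ℓ]}`, and
`Π[D(Φ,x)] = LCM{k*_ℓ}` where `k*_ℓ` is the cardinality of the image of the projection
`D_∞ → Γ_ℓ/C_ℓ`. -/
theorem steinitzOrders_eq_of_groupChain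
    {X : Type*} [MetricSpace X] [CompactSpace X] [Nonempty X] [TotallyDisconnectedSpace X]
    (hperf : Perfect (Set.univ : Set X))
    {Γ : Type*} [Group Γ] [Countable Γ] (Φ : Γ →* (X ≃ₜ X))
    (hmin : IsMinimalAction Φ) (heqc : IsEquicontinuousAction Φ)
    (x : X) (U : ℕ → Set X)
    (hadapt : ∀ ℓ, IsAdaptedSet Φ (U ℓ)) (hx : ∀ ℓ, x ∈ U ℓ)
    (hproper : ∀ ℓ, U (ℓ + 1) ⊂ U ℓ) (hinter : (⋂ ℓ, U ℓ) = {x}) :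
    steinitzOrderAction Φ =
        SteinitzNum.lcmSet
          (Set.range fun ℓ => ((adaptedStabilizer Φ (U ℓ)).normalCore).index) ∧
      steinitzOrderRel Φ x =
        SteinitzNum.lcmSet (Set.range fun ℓ => (adaptedStabilizer Φ (U ℓ)).index) ∧
      steinitzOrderDisc Φ x =
        SteinitzNum.lcmSet (Set.range fun ℓ =>
          Nat.card
            ↥((chainDinf (fun j => adaptedStabilizer Φ (U j))
                (fun j => adaptedStabilizer_mono Φ (hproper j).subset
                  (hadapt j) (hadapt (j + 1)))).map
              (Pi.evalMonoidHom (chainQuot fun j => adaptedStabilizer Φ (U j)) ℓ))) :=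
  steinitzOrders_eq_of_groupChain_general Φ hmin heqc x U hadapt hx hproper hinter
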